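/- Let a > 0, p := a/(a+b), c_{a,b} := (a+b)/(a+1), and define for x ∈ (0,1]: Q_{a,b}^{[S,1]}(x) := (1−x)^b + c_{a,b} x (1−x)^{b−1}; Q_{a,b}^{[S,2]}(x) := (1−x)^b/(1 − c_{a,b} x) if x ∈ (0,p] and Q_{a,b}^{[S,2]}(x) := (a+1)(1−p)^b if x ∈ [p,1]; Q_{a,b}^{[1]}(x) := (1 − a x/(a+1))^{b−1}; Q_{a,b}^{[2]}(x) := (1−x)^{b−1} + ((b−1)x/(a+1)) (1 − (a+1)x/(a+2))^{b−2}. Then for all x ∈ (0,1]: if b ∈ (0,1) then Q_{a,b}^{[S,2]}(x) < Q_{a,b}^{[1]}(x); if b ∈ (1,2] then Q_{a,b}^{[S,1]}(x) < Q_{a,b}^{[2]}(x); and if b ∈ [2,∞) then Q_{a,b}^{[S,1]}(x) < Q_{a,b}^{[1]}(x). (Hence the lower bounds for Q_{a,b} from Theorem 2 are stronger than those from Theorem 1.) -/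
import Mathlib

open MeasureTheory

section aux
open Real

/-- core inequality for part 1 -/
lemma key1_aux (a b x : ℝ) (ha : 0 < a) (hb0 : 0 < b) (hb1 : b < 1)
    (hx0 : 0 < x) (hx1 : x ≤ 1) :
    (1 - x) ^ b < (1 - a * x / (a + 1)) ^ (b - 1) * (1 - (a + b) / (a + 1) * x) := by
  have ha1 : (0:ℝ) < a + 1 := by linarith
  have hr : 0 < 1 - a * x / (a + 1) := by
    have h : a * x / (a + 1) < 1 := by rw [div_lt_one ha1]; nlinarith
    linarith
  have h1x : 1 - x < 1 - a * x / (a + 1) := by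
    have h : a * x / (a + 1) < x := by rw [div_lt_iff₀ ha1]; nlinarith
    linarith
  set r := 1 - a * x / (a + 1) with hrdef
  set θ := (1 - x) / r with hθdef
  have hθ0 : 0 ≤ θ := div_nonneg (by linarith) hr.le
  have hθ1 : θ < 1 := (div_lt_one hr).mpr h1x
  have hbern : θ ^ b < 1 + b * (θ - 1) := by
    have h := rpow_one_add_lt_one_add_mul_self (s := θ - 1) (by linarith)
      (sub_ne_zero.mpr hθ1.ne) hb0 hb1
    have h2 : (1:ℝ) + (θ - 1) = θ := by ring
    rwa [h2] at h
  have hx' : 1 - x = θ * r := by rw [hθdef]; field_simp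
  have hrb : r ^ (b - 1) * r = r ^ b := by
    rw [Real.rpow_sub_one hr.ne']; field_simp
  have hscal : r * (1 + b * (θ - 1)) = 1 - (a + b) / (a + 1) * x := by
    have h : r * (1 + b * (θ - 1)) = r + b * (θ * r - r) := by ring
    rw [h, ← hx', hrdef]
    field_simp
    ring
  calc (1 - x) ^ b = θ ^ b * r ^ b := by rw [hx', Real.mul_rpow hθ0 hr.le]
    _ < (1 + b * (θ - 1)) * r ^ b :=
        mul_lt_mul_of_pos_right hbern (rpow_pos_of_pos hr b)
    _ = r ^ (b - 1) * (r * (1 + b * (θ - 1))) := by rw [← hrb]; ring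
    _ = r ^ (b - 1) * (1 - (a + b) / (a + 1) * x) := by rw [hscal]

/-- Bernoulli-type inequality used for part 3. -/
lemma bern_ge_aux (u t s : ℝ) (hu : 0 < u) (ht : 0 ≤ t) (hs : 1 ≤ s) :
    u ^ s + s * t * u ^ (s - 1) ≤ (u + t) ^ s := by
  have hus : 0 < u ^ s := rpow_pos_of_pos hu s
  have htu : (0:ℝ) ≤ t / u := by positivity
  have h := one_add_mul_self_le_rpow_one_add (s := t / u) (by linarith) hs
  have h2 : (1 + t / u) ^ s * u ^ s = (u + t) ^ s := by
    rw [← Real.mul_rpow (by positivity) hu.le]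
    congr 1
    field_simp
  have h3 : (1 + s * (t / u)) * u ^ s = u ^ s + s * t * u ^ (s - 1) := by
    rw [Real.rpow_sub_one hu.ne']
    field_simp
  calc u ^ s + s * t * u ^ (s - 1) = (1 + s * (t / u)) * u ^ s := h3.symm
    _ ≤ (1 + t / u) ^ s * u ^ s := mul_le_mul_of_nonneg_right h hus.le
    _ = (u + t) ^ s := h2

end aux

/-- Segura-type bound `Q_{a,b}^{[S,1]}(x) = (1-x)^b + c_{a,b} x (1-x)^{b-1}`
with `c_{a,b} = (a+b)/(a+1)`. -/
noncomputable def QS1 (a b x : ℝ) : ℝ :=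
  (1 - x) ^ b + (a + b) / (a + 1) * x * (1 - x) ^ (b - 1)

/-- Segura-type bound `Q_{a,b}^{[S,2]}`, defined piecewise around `p = a/(a+b)`. -/
noncomputable def QS2 (a b x : ℝ) : ℝ :=
  if x ≤ a / (a + b) then (1 - x) ^ b / (1 - (a + b) / (a + 1) * x)
  else (a + 1) * (1 - a / (a + b)) ^ b

/-- The bound `Q_{a,b}^{[1]}(x) = (1 - ax/(a+1))^{b-1}`. -/
noncomputable def Q1 (a b x : ℝ) : ℝ :=
  (1 - a * x / (a + 1)) ^ (b - 1)

/-- The bound `Q_{a,b}^{[2]}(x) = (1-x)^{b-1} + ((b-1)x/(a+1))(1 - (a+1)x/(a+2))^{b-2}`. -/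
noncomputable def Q2 (a b x : ℝ) : ℝ :=
  (1 - x) ^ (b - 1) + (b - 1) * x / (a + 1) * (1 - (a + 1) * x / (a + 2)) ^ (b - 2)

theorem lower_bounds_comparison (a b : ℝ) (ha : 0 < a) (hb : 0 < b)
    (x : ℝ) (hx : x ∈ Set.Ioc (0:ℝ) 1) :
    (b < 1 → QS2 a b x < Q1 a b x) ∧
    (1 < b → b ≤ 2 → QS1 a b x < Q2 a b x) ∧
    (2 ≤ b → QS1 a b x < Q1 a b x) := by
  obtain ⟨hx0, hx1⟩ := hx
  have ha1 : (0:ℝ) < a + 1 := by linarith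
  have hab : (0:ℝ) < a + b := by linarith
  have hrQ1 : 0 < 1 - a * x / (a + 1) := by
    have h : a * x / (a + 1) < 1 := by rw [div_lt_one ha1]; nlinarith
    linarith
  refine ⟨?_, ?_, ?_⟩
  · -- b < 1 : QS2 < Q1
    intro hb1
    rw [QS2, Q1]
    split_ifs with hxp
    · -- x ≤ p
      have hcx : (a + b) / (a + 1) * x ≤ a / (a + 1) := by
        have heq : (a + b) / (a + 1) * (a / (a + b)) = a / (a + 1) := by field_simp; all_goals ring
        calc (a + b) / (a + 1) * x ≤ (a + b) / (a + 1) * (a / (a + b)) :=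
              mul_le_mul_of_nonneg_left hxp (by positivity)
          _ = a / (a + 1) := heq
      have h1cx : 0 < 1 - (a + b) / (a + 1) * x := by
        have : a / (a + 1) < 1 := by rw [div_lt_one ha1]; linarith
        linarith
      rw [div_lt_iff₀ h1cx]
      exact key1_aux a b x ha hb hb1 hx0 hx1
    · -- x > p
      push_neg at hxp
      have hp0 : 0 < a / (a + b) := by positivity
      have hp1 : a / (a + b) ≤ 1 := by rw [div_le_one hab]; linarith
      have hkey := key1_aux a b (a / (a + b)) ha hb hb1 hp0 hp1
      have hcp : 1 - (a + b) / (a + 1) * (a / (a + b)) = 1 / (a + 1) := by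
        field_simp
        all_goals ring
      rw [hcp] at hkey
      have hrp : 0 < 1 - a * (a / (a + b)) / (a + 1) := by
        have h : a * (a / (a + b)) / (a + 1) < 1 := by
          rw [div_lt_one ha1]
          nlinarith [mul_le_of_le_one_right ha.le hp1]
        linarith
      have hmono : (1 - a * (a / (a + b)) / (a + 1)) ^ (b - 1)
          ≤ (1 - a * x / (a + 1)) ^ (b - 1) := by
        apply Real.rpow_le_rpow_of_nonpos hrQ1 _ (by linarith)
        have h : a * (a / (a + b)) / (a + 1) ≤ a * x / (a + 1) := by
          gcongr
        linarith
      have h2 : (a + 1) * (1 - a / (a + b)) ^ b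
          < (1 - a * (a / (a + b)) / (a + 1)) ^ (b - 1) := by
        calc (a + 1) * (1 - a / (a + b)) ^ b
            < (a + 1) * ((1 - a * (a / (a + b)) / (a + 1)) ^ (b - 1) * (1 / (a + 1))) :=
              mul_lt_mul_of_pos_left hkey ha1
          _ = (1 - a * (a / (a + b)) / (a + 1)) ^ (b - 1) := by field_simp
      exact h2.trans_le hmono
  · -- 1 < b ≤ 2 : QS1 < Q2
    intro hb1 hb2
    have hb1' : 0 < b - 1 := by linarith
    rw [QS1, Q2]
    have hbne : b - 1 ≠ 0 := by positivity
    rcases eq_or_lt_of_le hx1 with heq | hxlt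
    · subst heq
      have h0 : (1:ℝ) - 1 = 0 := by ring
      rw [h0, Real.zero_rpow hb.ne', Real.zero_rpow hbne]
      have hw : 0 < 1 - (a + 1) * 1 / (a + 2) := by
        rw [sub_pos, div_lt_one (by linarith)]; linarith
      have hpos : 0 < (b - 1) * 1 / (a + 1) * (1 - (a + 1) * 1 / (a + 2)) ^ (b - 2) :=
        mul_pos (by positivity) (Real.rpow_pos_of_pos hw _)
      linarith
    · have hu : 0 < 1 - x := by linarith
      have hub : (1 - x) ^ b = (1 - x) ^ (b - 1) * (1 - x) := by
        rw [Real.rpow_sub_one hu.ne']; field_simp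
      have hw0 : 0 < 1 - (a + 1) * x / (a + 2) := by
        have h : (a + 1) * x / (a + 2) < 1 := by rw [div_lt_one (by linarith)]; nlinarith
        linarith
      have hw1 : 1 - (a + 1) * x / (a + 2) ≤ 1 := by
        have : 0 ≤ (a + 1) * x / (a + 2) := by positivity
        linarith
      have hcore : (1 - x) ^ (b - 1) < (1 - (a + 1) * x / (a + 2)) ^ (b - 2) := by
        calc (1 - x) ^ (b - 1) < 1 := Real.rpow_lt_one hu.le (by linarith) hb1'
          _ ≤ _ := Real.one_le_rpow_of_pos_of_le_one_of_nonpos hw0 hw1 (by linarith)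
      have hk : 0 < (b - 1) * x / (a + 1) := by positivity
      have heq1 : (1 - x) ^ b + (a + b) / (a + 1) * x * (1 - x) ^ (b - 1)
          = (1 - x) ^ (b - 1) + (b - 1) * x / (a + 1) * (1 - x) ^ (b - 1) := by
        rw [hub]; field_simp; ring
      rw [heq1]
      have := mul_lt_mul_of_pos_left hcore hk
      linarith
  · -- 2 ≤ b : QS1 < Q1
    intro hb2
    rw [QS1, Q1]
    have hbne : b - 1 ≠ 0 := by
      have : 0 < b - 1 := by linarith
      positivity
    rcases eq_or_lt_of_le hx1 with heq | hxlt
    · subst heq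
      have h0 : (1:ℝ) - 1 = 0 := by ring
      rw [h0, Real.zero_rpow hb.ne', Real.zero_rpow hbne]
      have : 0 < (1 - a * 1 / (a + 1)) ^ (b - 1) := Real.rpow_pos_of_pos hrQ1 _
      simpa using this
    · have hu : 0 < 1 - x := by linarith
      have hu1 : 1 - x < 1 := by linarith
      have ht : 0 < x / (a + 1) := by positivity
      have hbern := bern_ge_aux (1 - x) (x / (a + 1)) (b - 1) hu ht.le (by linarith)
      have hbase : (1 - x) + x / (a + 1) = 1 - a * x / (a + 1) := by field_simp; ring
      have hexp : b - 1 - 1 = b - 2 := by ring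
      rw [hbase, hexp] at hbern
      have hub : (1 - x) ^ b = (1 - x) ^ (b - 1) * (1 - x) := by
        rw [Real.rpow_sub_one hu.ne']; field_simp
      have hus1 : (1 - x) ^ (b - 1) = (1 - x) ^ (b - 2) * (1 - x) := by
        rw [show b - 1 = b - 2 + 1 by ring, Real.rpow_add_one hu.ne']
      have hpos : 0 < (1 - x) ^ (b - 2) := Real.rpow_pos_of_pos hu _
      have heq1 : (1 - x) ^ b + (a + b) / (a + 1) * x * (1 - x) ^ (b - 1)
          = (1 - x) ^ (b - 1) + (b - 1) * (x / (a + 1)) * ((1 - x) ^ (b - 2) * (1 - x)) := by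
        rw [hub, hus1]; field_simp; ring
      have hlt : (1 - x) ^ (b - 2) * (1 - x) < (1 - x) ^ (b - 2) := by nlinarith
      have hst : 0 < (b - 1) * (x / (a + 1)) := by
        have : 0 < b - 1 := by linarith
        positivity
      calc (1 - x) ^ b + (a + b) / (a + 1) * x * (1 - x) ^ (b - 1)
          = (1 - x) ^ (b - 1) + (b - 1) * (x / (a + 1)) * ((1 - x) ^ (b - 2) * (1 - x)) := heq1
        _ < (1 - x) ^ (b - 1) + (b - 1) * (x / (a + 1)) * (1 - x) ^ (b - 2) := by
            have := mul_lt_mul_of_pos_left hlt hst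
            linarith
        _ ≤ (1 - a * x / (a + 1)) ^ (b - 1) := hbern
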